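/- Let $H$ be a $(2,d)$-hypergraph and $U \subseteq V(H)$ with $\rho(U) \leq p$. Then the set $BE_p(U)$ of edges of $H[U]$ of size greater than $pd$ has cardinality at most $p$. Moreover, for each $e \in BE_p(U)$, the set $e' = e \setminus \bigcup(BE_p(U) \setminus \{e\})$ has size at least $d+1$, and $e$ is the only edge of $H[U]$ containing $e'$. -/

import Mathlib

open Finset

open scoped Classical

variable {α : Type*}

structure Hypergraph' (α : Type*) where
  verts : Finset α
  edges : Finset (Finset α)
  edge_sub : ∀ e ∈ edges, e ⊆ verts

namespace Hypergraph'

/-- `U` is a subedge of `H`: it is contained in some hyperedge. -/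
def IsSubedge (H : Hypergraph' α) (U : Finset α) : Prop := ∃ e ∈ H.edges, U ⊆ e

/-- `H` is a `(2,d)`-hypergraph: any two distinct edges intersect in at most `d` vertices. -/
def Is2dHypergraph (H : Hypergraph' α) (d : ℕ) : Prop :=
  ∀ e ∈ H.edges, ∀ f ∈ H.edges, e ≠ f → (e ∩ f).card ≤ d

/-- The induced subhypergraph `H[U]`. -/
noncomputable def induce (H : Hypergraph' α) (U : Finset α) : Hypergraph' α where
  verts := U
  edges := (H.edges.image (· ∩ U)).filter (· ≠ ∅)
  edge_sub := by
    intro e he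
    simp only [Finset.mem_filter, Finset.mem_image] at he
    obtain ⟨⟨f, hf, rfl⟩, -⟩ := he
    exact Finset.inter_subset_right

/-- The adjacency graph of a hypergraph: two distinct vertices are adjacent
iff they lie in a common edge. -/
def adjGraph (H : Hypergraph' α) : SimpleGraph α where
  Adj v w := v ≠ w ∧ ∃ e ∈ H.edges, v ∈ e ∧ w ∈ e
  symm := ⟨by rintro v w ⟨hne, e, he, hv, hw⟩; exact ⟨hne.symm, e, he, hw, hv⟩⟩
  loopless := ⟨by rintro v ⟨hne, -⟩; exact hne rfl⟩

/-- Adjacency in `H` avoiding the vertex set `S` (i.e. adjacency in `H[V(H) \ S]`). -/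
def avoidGraph (H : Hypergraph' α) (S : Finset α) : SimpleGraph α where
  Adj v w := v ≠ w ∧ v ∉ S ∧ w ∉ S ∧ ∃ e ∈ H.edges, v ∈ e ∧ w ∈ e
  symm := ⟨by rintro v w ⟨hne, hv, hw, e, he, h1, h2⟩; exact ⟨hne.symm, hw, hv, e, he, h2, h1⟩⟩
  loopless := ⟨by rintro v ⟨hne, -⟩; exact hne rfl⟩

/-- `S` is an `(A,B)`-separator of `H`: no path of `H[V(H) \ S]` joins
a vertex of `A \ S` to a vertex of `B \ S`. -/
def IsSeparator (H : Hypergraph' α) (A B S : Finset α) : Prop :=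
  ∀ a ∈ A, a ∉ S → ∀ b ∈ B, b ∉ S → ¬ (H.avoidGraph S).Reachable a b

/-- `U` has an edge cover of weight at most `k` (edge cover number `ρ(U) ≤ k`). -/
def CoverLE (H : Hypergraph' α) (U : Finset α) (k : ℕ) : Prop :=
  ∃ F : Finset (Finset α), F ⊆ H.edges ∧ U ⊆ F.biUnion id ∧ F.card ≤ k

/-- `(T, B)` is a tree decomposition of `H`. -/
def IsTreeDecomp (H : Hypergraph' α) {ι : Type*} (T : SimpleGraph ι) (B : ι → Finset α) : Prop :=
  T.IsTree ∧ (∀ u, B u ⊆ H.verts) ∧ (∀ e ∈ H.edges, ∃ u, e ⊆ B u) ∧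
  (∀ v ∈ H.verts, (T.induce {u | v ∈ B u}).Connected)

/-- Generalised hypertree width of `H` is at most `k`. -/
def ghwLE (H : Hypergraph' α) (k : ℕ) : Prop :=
  ∃ (ι : Type) (T : SimpleGraph ι) (B : ι → Finset α),
    H.IsTreeDecomp T B ∧ ∀ u, H.CoverLE (B u) k

/-- Two subedges are incompatible if their union is not a subedge. -/
def Incompatible (H : Hypergraph' α) (X Y : Finset α) : Prop := ¬ H.IsSubedge (X ∪ Y)

/-- `U₁,…,U_a, S₁,…,S_b` form an `(a,b)` subedge hypergrid (shyg). -/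
def IsShyg (H : Hypergraph' α) {a b : ℕ} (U : Fin a → Finset α) (S : Fin b → Finset α) : Prop :=
  (∀ i, H.IsSubedge (U i)) ∧ (∀ j, H.IsSubedge (S j)) ∧
  (∀ i i', i ≠ i' → H.Incompatible (U i) (U i')) ∧
  (∀ j j', j ≠ j' → H.Incompatible (S j) (S j')) ∧
  (∀ i j, H.Incompatible (U i) (S j)) ∧
  (∀ i i', i ≠ i' → Disjoint (U i) (U i')) ∧
  (∀ j i, (S j ∩ U i).Nonempty)

/-- A strong shyg: additionally the `S j` intersect pairwise disjointly inside `⋃ U i`. -/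
def IsStrongShyg (H : Hypergraph' α) {a b : ℕ}
    (U : Fin a → Finset α) (S : Fin b → Finset α) : Prop :=
  H.IsShyg U S ∧ ∀ j j', j ≠ j' → S j ∩ S j' ∩ Finset.univ.biUnion U = ∅

/-- `H` has a strong `(a,b)`-shyg. -/
def HasStrongShyg (H : Hypergraph' α) (a b : ℕ) : Prop :=
  ∃ (U : Fin a → Finset α) (S : Fin b → Finset α), H.IsStrongShyg U S

/-- `ext(C, E')`: the edges of `E'` meeting `C`. -/
noncomputable def ext (E' : Finset (Finset α)) (C : Finset α) : Finset (Finset α) :=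
  E'.filter fun e => (e ∩ C).Nonempty

/-- `C` is (the vertex set of) a connected component of `H`. -/
def IsConnComp (H : Hypergraph' α) (C : Finset α) : Prop :=
  ∃ v ∈ H.verts, ∀ w, w ∈ C ↔ w ∈ H.verts ∧ H.adjGraph.Reachable v w

end Hypergraph'

/-- The vertex set of `T_{x,Y}`: the union of all paths of `G` starting at `x`
whose second vertex belongs to `Y`. -/
def subtreeVerts {V : Type*} (G : SimpleGraph V) (x : V) (Y : Set V) : Set V :=
  {v | v = x ∨ ∃ w : G.Walk x v, w.IsPath ∧ w.getVert 1 ∈ Y ∧ ¬ w.Nil}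

/-- The tree `T⁺_{t,Y}`: the restriction of `T` to `s` together with a fresh node `none`
made adjacent to `t`. -/
def plusGraph {ι : Type*} (T : SimpleGraph ι) (s : Set ι) (t : ι) :
    SimpleGraph (Option s) where
  Adj a b :=
    (∃ u v : s, a = some u ∧ b = some v ∧ T.Adj u v) ∨
    (a = none ∧ ∃ v : s, b = some v ∧ (v : ι) = t) ∨
    (b = none ∧ ∃ u : s, a = some u ∧ (u : ι) = t)
  symm := ⟨by
    rintro a b (⟨u, v, rfl, rfl, h⟩ | ⟨rfl, v, rfl, hv⟩ | ⟨rfl, u, rfl, hu⟩)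
    · exact Or.inl ⟨v, u, rfl, rfl, h.symm⟩
    · exact Or.inr (Or.inr ⟨rfl, v, rfl, hv⟩)
    · exact Or.inr (Or.inl ⟨rfl, u, rfl, hu⟩)⟩
  loopless := ⟨by
    rintro a (⟨u, v, rfl, h1, h2⟩ | ⟨rfl, v, h, -⟩ | ⟨rfl, u, h, -⟩)
    · obtain rfl : u = v := Option.some_injective _ h1
      exact T.loopless.irrefl _ h2
    · cases h
    · cases h⟩

/-- `ξ'(n,k,d)` from the paper. -/
def xi' (k d : ℕ) : ℕ → ℕ
  | 0 => (3*k+1)*d+1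
  | n+1 => ((3*k+1)*d)^2 * xi' k d n + 1
/-- The `p`-big edges of `H[U]`: edges of size greater than `p·d`. -/
noncomputable def bigEdges {α : Type*} (H : Hypergraph' α) (U : Finset α) (p d : ℕ) :
    Finset (Finset α) :=
  (H.induce U).edges.filter fun e => p * d < e.card

theorem big_edges_basic {α : Type*} (H : Hypergraph' α) (d p : ℕ)
    (h2d : H.Is2dHypergraph d) (U : Finset α) (hU : U ⊆ H.verts)
    (hrho : (H.induce U).CoverLE U p) :
    (bigEdges H U p d).card ≤ p ∧
    ∀ e ∈ bigEdges H U p d,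
      d + 1 ≤ (e \ ((bigEdges H U p d).erase e).biUnion id).card ∧
      ∀ f ∈ (H.induce U).edges,
        (e \ ((bigEdges H U p d).erase e).biUnion id) ⊆ f → f = e := by
  classical
  obtain ⟨F, hFsub, hUsub, hFcard⟩ := hrho
  -- the induced hypergraph is also (2,d)
  have h2d' : (H.induce U).Is2dHypergraph d := by
    intro g₁ hg₁ g₂ hg₂ hne
    simp only [Hypergraph'.induce, Finset.mem_filter, Finset.mem_image] at hg₁ hg₂
    obtain ⟨⟨e, he, rfl⟩, -⟩ := hg₁
    obtain ⟨⟨f, hf, rfl⟩, -⟩ := hg₂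
    have hef : e ≠ f := by rintro rfl; exact hne rfl
    calc (e ∩ U ∩ (f ∩ U)).card ≤ (e ∩ f).card := by
          apply card_le_card; intro x hx
          simp only [mem_inter] at hx ⊢; tauto
      _ ≤ d := h2d e he f hf hef
  have hBE_edges : ∀ e ∈ bigEdges H U p d, e ∈ (H.induce U).edges ∧ p * d < e.card := by
    intro e he; simpa [bigEdges, Finset.mem_filter] using he
  -- every big edge belongs to F
  have hBEF : bigEdges H U p d ⊆ F := by
    intro e he
    obtain ⟨heE, hecard⟩ := hBE_edges e he
    by_contra heF
    have hesub : e ⊆ F.biUnion id := fun x hx =>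
      hUsub ((H.induce U).edge_sub e heE hx)
    have hsub2 : e ⊆ F.biUnion (fun f => e ∩ f) := by
      intro x hx
      obtain ⟨f, hf, hxf⟩ := Finset.mem_biUnion.mp (hesub hx)
      exact Finset.mem_biUnion.mpr ⟨f, hf, Finset.mem_inter.mpr ⟨hx, hxf⟩⟩
    have hcard : e.card ≤ F.card * d := by
      calc e.card ≤ (F.biUnion fun f => e ∩ f).card := card_le_card hsub2
        _ ≤ ∑ f ∈ F, (e ∩ f).card := card_biUnion_le
        _ ≤ ∑ _f ∈ F, d := Finset.sum_le_sum (fun f hf =>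
            h2d' e heE f (hFsub hf) (by rintro rfl; exact heF hf))
        _ = F.card * d := by rw [Finset.sum_const, smul_eq_mul]
    have : e.card ≤ p * d := hcard.trans (Nat.mul_le_mul_right d hFcard)
    omega
  have hcardBE : (bigEdges H U p d).card ≤ p := (card_le_card hBEF).trans hFcard
  refine ⟨hcardBE, fun e he => ?_⟩
  obtain ⟨heE, hecard⟩ := hBE_edges e he
  set B := ((bigEdges H U p d).erase e).biUnion id with hB
  have hp1 : 1 ≤ p := le_trans (Finset.card_pos.mpr ⟨e, he⟩) hcardBE
  have herase : ((bigEdges H U p d).erase e).card ≤ p - 1 := by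
    rw [Finset.card_erase_of_mem he]; omega
  have hinter : (e ∩ B).card ≤ (p - 1) * d := by
    have h1 : e ∩ B = ((bigEdges H U p d).erase e).biUnion (fun f => e ∩ f) := by
      ext x
      simp only [hB, mem_inter, Finset.mem_biUnion, id]
      tauto
    rw [h1]
    calc _ ≤ ∑ f ∈ (bigEdges H U p d).erase e, (e ∩ f).card := card_biUnion_le
      _ ≤ ∑ _f ∈ (bigEdges H U p d).erase e, d := Finset.sum_le_sum (fun f hf =>
          h2d' e heE f ((hBE_edges f (Finset.mem_of_mem_erase hf)).1)
            (Ne.symm (Finset.ne_of_mem_erase hf)))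
      _ = ((bigEdges H U p d).erase e).card * d := by rw [Finset.sum_const, smul_eq_mul]
      _ ≤ (p - 1) * d := Nat.mul_le_mul_right d herase
  have hsd : e \ B = e \ (e ∩ B) := by
    ext x; simp only [mem_sdiff, mem_inter]; tauto
  have hcard' : (e \ B).card = e.card - (e ∩ B).card := by
    rw [hsd, card_sdiff_of_subset inter_subset_left]
  have hpd : (p - 1) * d + d = p * d := by
    obtain ⟨q, rfl⟩ : ∃ q, p = q + 1 := ⟨p - 1, by omega⟩
    simp [Nat.add_mul]
  have hge : d + 1 ≤ (e \ B).card := by rw [hcard']; omega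
  refine ⟨hge, fun f hf hsub => ?_⟩
  by_contra hne
  have hsub' : e \ B ⊆ e ∩ f := fun x hx =>
    mem_inter.mpr ⟨(mem_sdiff.mp hx).1, hsub hx⟩
  have h1 := card_le_card hsub'
  have hd := h2d' e heE f hf (fun h => hne h.symm)
  omega
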